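/- Let ζ = e^{2πi/72} ∈ ℂ (so q = ζ²⁴ = e^{2πi/3}). Let ε_m = −1 if m ≡ ±1 (mod 12), ε_m = +1 if m ≡ ±5 (mod 12), ε_m = 0 otherwise. For n ≥ 1 set J_n = −(ζ^{−36n²+24}/(ζ^{12n} − ζ^{−12n})) · Σ_{r=0}^{6n} ε_{6n−r} ζ^{r²−1} (the colored Jones polynomial of the right-handed trefoil T(2,3) evaluated with q^{1/24} = ζ) and [n] = (ζ^{12n} − ζ^{−12n})/(ζ^{12} − ζ^{−12}). Then (−i(ζ^{12} − ζ^{−12})/√6) · (Σ_{n=1}^{2} [n]² ζ^{−6(n²−1)} J_n²) / (Σ_{n=1}^{2} [n]² ζ^{−6(n²−1)}) = 1/√2. (This is the SU(2) Chern–Simons partition function Z_CS[S³_{−1}(T(2,3) # T(2,3))] at level k = 3.) -/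

import Mathlib

/-!
At level `k = 3` the half-power `ω = q^{1/2} = ζ¹² = e^{iπ/3}` is a primitive sixth root of unity:
`ω² = ω - 1`, hence `ω⁻¹ = 1 - ω` and `ω³ = -1`. Only the `r` prime to `6` contribute to `J_n`,
and for those `24 ∣ r² - 1`, so `J₁`, `J₂` and `[2]` are rational functions of `ω`; reducing
modulo `ω² = ω - 1` gives `J₁ = J₂ = 1` (generically `J₂ = q⁻¹ + q⁻³ - q⁻⁴`, and `q³ = 1`) and
`[2] = ω + ω⁻¹ = 1`. So numerator and denominator of the WRT quotient agree, the denominator being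
`1 + ζ⁻¹⁸ ≠ 0` because `(ζ¹⁸)² = ω³ = -1`. What remains is the normalisation
`-i(ω - ω⁻¹)/√6 = -i · i√3/√6 = 1/√2`.
-/

open scoped Classical in
/-- `ε_m = −1` if `m ≡ ±1 (mod 12)`, `ε_m = +1` if `m ≡ ±5 (mod 12)`, `ε_m = 0` otherwise. -/
noncomputable def trefoilEps (m : ℤ) : ℤ :=
  if (m ≡ 1 [ZMOD 12] ∨ m ≡ -1 [ZMOD 12]) then -1
  else if (m ≡ 5 [ZMOD 12] ∨ m ≡ -5 [ZMOD 12]) then 1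
  else 0

/-- `ζ = e^{2πi/72}`, so that `q = ζ²⁴ = e^{2πi/3}` (level `k = 3`). -/
noncomputable def ζ72 : ℂ := Complex.exp (2 * Real.pi * Complex.I / 72)

/-- The colored Jones polynomial of the right-handed trefoil `T(2,3)` evaluated with
`q^{1/24} = ζ = e^{2πi/72}`:
`J_n = −(ζ^{−36n²+24}/(ζ^{12n} − ζ^{−12n})) Σ_{r=0}^{6n} ε_{6n−r} ζ^{r²−1}`. -/
noncomputable def J72 (n : ℕ) : ℂ :=
  -(ζ72 ^ (-36*(n:ℤ)^2 + 24) / (ζ72 ^ (12*(n:ℤ)) - ζ72 ^ (-(12*(n:ℤ))))) *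
    ∑ r ∈ Finset.range (6*n + 1), (trefoilEps (6*(n:ℤ) - (r:ℤ)) : ℂ) * ζ72 ^ ((r:ℤ)^2 - 1)

/-- The quantum integer `[n] = (ζ^{12n} − ζ^{−12n})/(ζ^{12} − ζ^{−12})`. -/
noncomputable def qint72 (n : ℕ) : ℂ :=
  (ζ72 ^ (12*(n:ℤ)) - ζ72 ^ (-(12*(n:ℤ)))) / (ζ72 ^ (12:ℤ) - ζ72 ^ (-12:ℤ))

open Complex Real

theorem inv_eq_one_sub_of_sq_eq_sub_one {ω : ℂ} (hω : ω ^ 2 = ω - 1) : ω⁻¹ = 1 - ω :=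
  inv_eq_of_mul_eq_one_right (by linear_combination -hω)

theorem pow_three_eq_neg_one_of_sq_eq_sub_one {ω : ℂ} (hω : ω ^ 2 = ω - 1) : ω ^ 3 = -1 := by
  linear_combination (ω + 1) * hω

theorem ζ72_pow_twelve : ζ72 ^ 12 = 1 / 2 + √3 / 2 * I := by
  rw [ζ72, ← Complex.exp_nat_mul, show ((12 : ℕ) : ℂ) * (2 * π * I / 72) = ((π / 3 : ℝ) : ℂ) * I by
    push_cast; ring, exp_mul_I, ← ofReal_cos, ← ofReal_sin, cos_pi_div_three, sin_pi_div_three]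
  push_cast
  ring

theorem ζ72_pow_twelve_sq : (ζ72 ^ 12) ^ 2 = ζ72 ^ 12 - 1 := by
  have h3 : ((√3 : ℝ) : ℂ) ^ 2 = 3 := by norm_cast; simp
  rw [ζ72_pow_twelve]
  linear_combination I ^ 2 / 4 * h3 + 3 / 4 * I_sq

theorem ζ72_zpow_twelve_sub_zpow_neg_twelve : ζ72 ^ (12 : ℤ) - ζ72 ^ (-12 : ℤ) = √3 * I := by
  rw [zpow_neg, zpow_ofNat, inv_eq_one_sub_of_sq_eq_sub_one ζ72_pow_twelve_sq, ζ72_pow_twelve]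
  ring

theorem qint72_one : qint72 1 = 1 := by
  have h : ζ72 ^ (12 : ℤ) - ζ72 ^ (-12 : ℤ) ≠ 0 := by
    rw [ζ72_zpow_twelve_sub_zpow_neg_twelve]
    simp
  simpa [qint72] using div_self h

theorem qint72_two : qint72 2 = 1 := by
  have hω := ζ72_pow_twelve_sq
  have h : qint72 2 = ((ζ72 ^ 12) ^ 2 - ((ζ72 ^ 12) ^ 2)⁻¹) / (ζ72 ^ 12 - (ζ72 ^ 12)⁻¹) := by
    simp [qint72, ← pow_mul]
  rw [h]
  generalize ζ72 ^ 12 = ω at hω ⊢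
  rw [← inv_pow, inv_eq_one_sub_of_sq_eq_sub_one hω]
  grind

theorem J72_one : J72 1 = 1 := by
  have hω := ζ72_pow_twelve_sq
  have h : J72 1 = -((ζ72 ^ 12)⁻¹ / (ζ72 ^ 12 - (ζ72 ^ 12)⁻¹) * (1 + -(ζ72 ^ 12) ^ 2)) := by
    simp [J72, Finset.sum_range_succ, trefoilEps, Int.ModEq, ← pow_mul]
  rw [h]
  generalize ζ72 ^ 12 = ω at hω ⊢
  rw [inv_eq_one_sub_of_sq_eq_sub_one hω]
  grind

theorem J72_two : J72 2 = 1 := by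
  have hω := ζ72_pow_twelve_sq
  have h : J72 2 = -(((ζ72 ^ 12) ^ 10)⁻¹ / ((ζ72 ^ 12) ^ 2 - ((ζ72 ^ 12) ^ 2)⁻¹) *
      (-1 + (ζ72 ^ 12) ^ 2 + (ζ72 ^ 12) ^ 4 + -(ζ72 ^ 12) ^ 10)) := by
    simp [J72, Finset.sum_range_succ, trefoilEps, Int.ModEq, ← pow_mul]
  rw [h]
  generalize ζ72 ^ 12 = ω at hω ⊢
  rw [← inv_pow, ← inv_pow, inv_eq_one_sub_of_sq_eq_sub_one hω]
  grind

theorem ζ72_pow_eighteen_ne_neg_one : ζ72 ^ 18 ≠ -1 := by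
  intro h
  have h36 := pow_three_eq_neg_one_of_sq_eq_sub_one ζ72_pow_twelve_sq
  rw [← pow_mul, show 12 * 3 = 18 * 2 from rfl, pow_mul, h] at h36
  norm_num at h36

theorem wrt_denominator_ne_zero :
    ∑ n ∈ Finset.Icc 1 2, (qint72 n) ^ 2 * ζ72 ^ (-6 * ((n : ℤ) ^ 2 - 1)) ≠ 0 := by
  have hsum : ∑ n ∈ Finset.Icc 1 2, (qint72 n) ^ 2 * ζ72 ^ (-6 * ((n : ℤ) ^ 2 - 1)) =
      1 + (ζ72 ^ 18)⁻¹ := by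
    simp [Finset.sum_Icc_succ_top, qint72_one, qint72_two]
  rw [hsum]
  intro h
  apply ζ72_pow_eighteen_ne_neg_one
  rw [← inv_inj, inv_neg, inv_one]
  linear_combination h

theorem neg_I_mul_sqrt_three_mul_I_div_sqrt_six : -I * (√3 * I) / (√6 : ℂ) = 1 / (√2 : ℂ) := by
  have h6 : (√6 : ℂ) = √2 * √3 := by
    rw [← ofReal_mul, ← Real.sqrt_mul (by norm_num)]
    norm_num
  have h2 : (√2 : ℂ) ≠ 0 := by simp
  have h3 : (√3 : ℂ) ≠ 0 := by simp
  rw [h6]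
  field_simp
  linear_combination -I_sq

/-- The SU(2) Chern–Simons partition function of `S³_{−1}(T(2,3) # T(2,3))` at level
`k = 3` equals `1/√2`:
`(−i(ζ¹² − ζ⁻¹²)/√6) · (Σ_{n=1}^{2} [n]² ζ^{−6(n²−1)} J_n²)/(Σ_{n=1}^{2} [n]² ζ^{−6(n²−1)}) = 1/√2`. -/
theorem Z_CS_trefoil_connected_sum_level_three :
    (-Complex.I * (ζ72 ^ (12:ℤ) - ζ72 ^ (-12:ℤ)) / (Real.sqrt 6 : ℂ)) *
      ((∑ n ∈ Finset.Icc 1 2, (qint72 n)^2 * ζ72 ^ (-6*((n:ℤ)^2 - 1)) * (J72 n)^2) /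
        (∑ n ∈ Finset.Icc 1 2, (qint72 n)^2 * ζ72 ^ (-6*((n:ℤ)^2 - 1))))
      = 1 / (Real.sqrt 2 : ℂ) := by
  have hJ : ∀ n ∈ Finset.Icc 1 2, J72 n ^ 2 = 1 := by
    intro n hn
    obtain rfl | rfl : n = 1 ∨ n = 2 := by rw [Finset.mem_Icc] at hn; omega
    · rw [J72_one, one_pow]
    · rw [J72_two, one_pow]
  rw [Finset.sum_congr rfl fun n hn => by rw [hJ n hn, mul_one], div_self wrt_denominator_ne_zero,
    mul_one, ζ72_zpow_twelve_sub_zpow_neg_twelve, neg_I_mul_sqrt_three_mul_I_div_sqrt_six]
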